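/- The rule (tra) is eliminable in the calculus G3Int + {(id*), (⊃_l*), (lift)} − (ref): every derivation in G3Int extended with (id*), (⊃_l*), and (lift) but without (ref) can be transformed into a derivation of the same end sequent that contains no applications of (tra). -/
import Mathlib


/-- Formulae of propositional intuitionistic logic. -/
inductive Fml : Type
  | atom : ℕ → Fml
  | bot  : Fml
  | and  : Fml → Fml → Fml
  | or   : Fml → Fml → Fml
  | imp  : Fml → Fml → Fml

abbrev RAtoms := Multiset (ℕ × ℕ)
abbrev LFml := Multiset (ℕ × Fml)

/-- The label `v` does not occur in the sequent `R, Γ ⇒ Δ`. -/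
def freshL (v : ℕ) (R : RAtoms) (Γ Δ : LFml) : Prop :=
  (∀ q ∈ R, v ≠ q.1 ∧ v ≠ q.2) ∧ (∀ q ∈ Γ, v ≠ q.1) ∧ (∀ q ∈ Δ, v ≠ q.1)

/-- Derivability in `G3Int` extended with `(id*)`, `(⊃_l*)` and (when
`useLift = true`) the rule `(lift)`; the structural rules `(ref)` and `(tra)`
are available exactly when the corresponding flag is `true`. -/
inductive DerE (useRef useTra useLift : Bool) : RAtoms → LFml → LFml → Prop
  | id (R : RAtoms) (Γ Δ : LFml) (w v p : ℕ) :
      DerE useRef useTra useLift ((w, v) ::ₘ R)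
        ((w, Fml.atom p) ::ₘ Γ) ((v, Fml.atom p) ::ₘ Δ)
  | idStar (R : RAtoms) (Γ Δ : LFml) (w p : ℕ) :
      DerE useRef useTra useLift R ((w, Fml.atom p) ::ₘ Γ) ((w, Fml.atom p) ::ₘ Δ)
  | botL (R : RAtoms) (Γ Δ : LFml) (w : ℕ) :
      DerE useRef useTra useLift R ((w, Fml.bot) ::ₘ Γ) Δ
  | andL {R Γ Δ} (w : ℕ) (A B : Fml) :
      DerE useRef useTra useLift R ((w, A) ::ₘ (w, B) ::ₘ Γ) Δ →
      DerE useRef useTra useLift R ((w, Fml.and A B) ::ₘ Γ) Δ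
  | andR {R Γ Δ} (w : ℕ) (A B : Fml) :
      DerE useRef useTra useLift R Γ ((w, A) ::ₘ Δ) →
      DerE useRef useTra useLift R Γ ((w, B) ::ₘ Δ) →
      DerE useRef useTra useLift R Γ ((w, Fml.and A B) ::ₘ Δ)
  | orL {R Γ Δ} (w : ℕ) (A B : Fml) :
      DerE useRef useTra useLift R ((w, A) ::ₘ Γ) Δ →
      DerE useRef useTra useLift R ((w, B) ::ₘ Γ) Δ →
      DerE useRef useTra useLift R ((w, Fml.or A B) ::ₘ Γ) Δ
  | orR {R Γ Δ} (w : ℕ) (A B : Fml) :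
      DerE useRef useTra useLift R Γ ((w, A) ::ₘ (w, B) ::ₘ Δ) →
      DerE useRef useTra useLift R Γ ((w, Fml.or A B) ::ₘ Δ)
  | impL {R Γ Δ} (w v : ℕ) (A B : Fml) :
      DerE useRef useTra useLift ((w, v) ::ₘ R) ((w, Fml.imp A B) ::ₘ Γ) ((v, A) ::ₘ Δ) →
      DerE useRef useTra useLift ((w, v) ::ₘ R) ((w, Fml.imp A B) ::ₘ (v, B) ::ₘ Γ) Δ →
      DerE useRef useTra useLift ((w, v) ::ₘ R) ((w, Fml.imp A B) ::ₘ Γ) Δ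
  | impLStar {R Γ Δ} (w : ℕ) (A B : Fml) :
      DerE useRef useTra useLift R ((w, Fml.imp A B) ::ₘ Γ) ((w, A) ::ₘ Δ) →
      DerE useRef useTra useLift R ((w, Fml.imp A B) ::ₘ (w, B) ::ₘ Γ) Δ →
      DerE useRef useTra useLift R ((w, Fml.imp A B) ::ₘ Γ) Δ
  | impR {R Γ Δ} (w v : ℕ) (A B : Fml) :
      freshL v R Γ ((w, Fml.imp A B) ::ₘ Δ) →
      DerE useRef useTra useLift ((w, v) ::ₘ R) ((v, A) ::ₘ Γ) ((v, B) ::ₘ Δ) →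
      DerE useRef useTra useLift R Γ ((w, Fml.imp A B) ::ₘ Δ)
  | lift {R Γ Δ} (w u : ℕ) (A : Fml) :
      useLift = true →
      DerE useRef useTra useLift ((w, u) ::ₘ R) ((w, A) ::ₘ (u, A) ::ₘ Γ) Δ →
      DerE useRef useTra useLift ((w, u) ::ₘ R) ((w, A) ::ₘ Γ) Δ
  | ref {R Γ Δ} (w : ℕ) :
      useRef = true →
      DerE useRef useTra useLift ((w, w) ::ₘ R) Γ Δ →
      DerE useRef useTra useLift R Γ Δ
  | tra {R Γ Δ} (w v u : ℕ) :
      useTra = true →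
      DerE useRef useTra useLift ((w, v) ::ₘ (v, u) ::ₘ (w, u) ::ₘ R) Γ Δ →
      DerE useRef useTra useLift ((w, v) ::ₘ (v, u) ::ₘ R) Γ Δ

open Multiset

def mapR (f : ℕ → ℕ) (R : RAtoms) : RAtoms := R.map (fun p => (f p.1, f p.2))
def mapL (f : ℕ → ℕ) (G : LFml) : LFml := G.map (fun p => (f p.1, p.2))

def lab (R : RAtoms) (G D : LFml) : ℕ :=
  (R.map (fun p => p.1 + p.2)).sum + (G.map Prod.fst).sum + (D.map Prod.fst).sum

lemma fresh_lab (R : RAtoms) (G D : LFml) : freshL (lab R G D + 1) R G D := by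
  refine ⟨?_, ?_, ?_⟩
  · intro q hq
    have h1 : q.1 + q.2 ≤ (R.map (fun p => p.1 + p.2)).sum :=
      Multiset.single_le_sum (fun x _ => Nat.zero_le x) _ (Multiset.mem_map_of_mem _ hq)
    unfold lab; omega
  · intro q hq
    have h1 : q.1 ≤ (G.map Prod.fst).sum :=
      Multiset.single_le_sum (fun x _ => Nat.zero_le x) _ (Multiset.mem_map_of_mem _ hq)
    unfold lab; omega
  · intro q hq
    have h1 : q.1 ≤ (D.map Prod.fst).sum :=
      Multiset.single_le_sum (fun x _ => Nat.zero_le x) _ (Multiset.mem_map_of_mem _ hq)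
    unfold lab; omega

/-- Weakening combined with label substitution. -/
lemma wsub {R Γ Δ} (h : DerE false false true R Γ Δ) :
    ∀ σ R' Γ' Δ', DerE false false true (R' + mapR σ R) (Γ' + mapL σ Γ) (Δ' + mapL σ Δ) := by
  induction h with
  | id R Γ Δ w v p =>
    intro σ R' Γ' Δ'
    simp only [mapR, mapL, Multiset.map_cons, Multiset.add_cons]
    exact DerE.id _ _ _ _ _ _
  | idStar R Γ Δ w p =>
    intro σ R' Γ' Δ'
    simp only [mapR, mapL, Multiset.map_cons, Multiset.add_cons]
    exact DerE.idStar _ _ _ _ _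
  | botL R Γ Δ w =>
    intro σ R' Γ' Δ'
    simp only [mapR, mapL, Multiset.map_cons, Multiset.add_cons]
    exact DerE.botL _ _ _ _
  | andL w A B hd ih =>
    intro σ R' Γ' Δ'
    simp only [mapR, mapL, Multiset.map_cons, Multiset.add_cons]
    refine DerE.andL _ _ _ ?_
    have := ih σ R' Γ' Δ'
    simpa only [mapR, mapL, Multiset.map_cons, Multiset.add_cons] using this
  | andR w A B h1 h2 ih1 ih2 =>
    intro σ R' Γ' Δ'
    simp only [mapR, mapL, Multiset.map_cons, Multiset.add_cons]
    refine DerE.andR _ _ _ ?_ ?_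
    · have := ih1 σ R' Γ' Δ'
      simpa only [mapR, mapL, Multiset.map_cons, Multiset.add_cons] using this
    · have := ih2 σ R' Γ' Δ'
      simpa only [mapR, mapL, Multiset.map_cons, Multiset.add_cons] using this
  | orL w A B h1 h2 ih1 ih2 =>
    intro σ R' Γ' Δ'
    simp only [mapR, mapL, Multiset.map_cons, Multiset.add_cons]
    refine DerE.orL _ _ _ ?_ ?_
    · have := ih1 σ R' Γ' Δ'
      simpa only [mapR, mapL, Multiset.map_cons, Multiset.add_cons] using this
    · have := ih2 σ R' Γ' Δ'
      simpa only [mapR, mapL, Multiset.map_cons, Multiset.add_cons] using this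
  | orR w A B hd ih =>
    intro σ R' Γ' Δ'
    simp only [mapR, mapL, Multiset.map_cons, Multiset.add_cons]
    refine DerE.orR _ _ _ ?_
    have := ih σ R' Γ' Δ'
    simpa only [mapR, mapL, Multiset.map_cons, Multiset.add_cons] using this
  | impL w v A B h1 h2 ih1 ih2 =>
    intro σ R' Γ' Δ'
    simp only [mapR, mapL, Multiset.map_cons, Multiset.add_cons]
    refine DerE.impL _ _ _ _ ?_ ?_
    · have := ih1 σ R' Γ' Δ'
      simpa only [mapR, mapL, Multiset.map_cons, Multiset.add_cons] using this
    · have := ih2 σ R' Γ' Δ'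
      simpa only [mapR, mapL, Multiset.map_cons, Multiset.add_cons] using this
  | impLStar w A B h1 h2 ih1 ih2 =>
    intro σ R' Γ' Δ'
    simp only [mapR, mapL, Multiset.map_cons, Multiset.add_cons]
    refine DerE.impLStar _ _ _ ?_ ?_
    · have := ih1 σ R' Γ' Δ'
      simpa only [mapR, mapL, Multiset.map_cons, Multiset.add_cons] using this
    · have := ih2 σ R' Γ' Δ'
      simpa only [mapR, mapL, Multiset.map_cons, Multiset.add_cons] using this
  | impR w v A B hf hd ih =>
    rename_i R Γ Δ
    intro σ R' Γ' Δ'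
    have hvw : v ≠ w := hf.2.2 (w, Fml.imp A B) (Multiset.mem_cons_self _ _)
    obtain ⟨v', hfresh⟩ : ∃ v', freshL v' (R' + mapR σ R) (Γ' + mapL σ Γ)
        ((σ w, Fml.imp A B) ::ₘ (Δ' + mapL σ Δ)) := ⟨_, fresh_lab _ _ _⟩
    have hσw : Function.update σ v v' w = σ w :=
      Function.update_of_ne (fun hh => hvw hh.symm) _ _
    have hσv : Function.update σ v v' v = v' := Function.update_self _ _ _
    have e1 : Multiset.map (fun p => (Function.update σ v v' p.1, Function.update σ v v' p.2)) R
        = mapR σ R := by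
      unfold mapR; refine Multiset.map_congr rfl ?_
      intro q hq
      have h1 := hf.1 q hq
      rw [Function.update_of_ne (fun hh => h1.1 hh.symm),
          Function.update_of_ne (fun hh => h1.2 hh.symm)]
    have e2 : Multiset.map (fun p => (Function.update σ v v' p.1, p.2)) Γ = mapL σ Γ := by
      unfold mapL; refine Multiset.map_congr rfl ?_
      intro q hq
      have h1 := hf.2.1 q hq
      rw [Function.update_of_ne (fun hh => h1 hh.symm)]
    have e3 : Multiset.map (fun p => (Function.update σ v v' p.1, p.2)) Δ = mapL σ Δ := by
      unfold mapL; refine Multiset.map_congr rfl ?_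
      intro q hq
      have h1 := hf.2.2 q (Multiset.mem_cons_of_mem hq)
      rw [Function.update_of_ne (fun hh => h1 hh.symm)]
    have hprem := ih (Function.update σ v v') R' Γ' Δ'
    simp only [mapR, mapL, Multiset.map_cons, Multiset.add_cons, e1, e2, e3, hσw, hσv] at hprem
    have goal := DerE.impR (σ w) v' A B hfresh hprem
    simpa only [mapL, Multiset.map_cons, Multiset.add_cons] using goal
  | lift w u A htt hd ih =>
    intro σ R' Γ' Δ'
    simp only [mapR, mapL, Multiset.map_cons, Multiset.add_cons]
    refine DerE.lift _ _ _ rfl ?_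
    have := ih σ R' Γ' Δ'
    simpa only [mapR, mapL, Multiset.map_cons, Multiset.add_cons] using this
  | ref w htt hd ih => exact absurd htt (by simp)
  | tra w v u htt hd ih => exact absurd htt (by simp)

lemma mapR_id (R : RAtoms) : mapR id R = R := by
  unfold mapR; simp

lemma mapL_id (G : LFml) : mapL id G = G := by
  unfold mapL; simp

/-- Plain weakening. -/
lemma weak {R Γ Δ} (h : DerE false false true R Γ Δ) (R' : RAtoms) (Γ' Δ' : LFml) :
    DerE false false true (R' + R) (Γ' + Γ) (Δ' + Δ) := by
  have := wsub h id R' Γ' Δ'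
  rwa [mapR_id, mapL_id, mapL_id] at this

/-- Weakening by a single left formula. -/
lemma weakL {R Γ Δ} (a : ℕ × Fml) (h : DerE false false true R Γ Δ) :
    DerE false false true R (a ::ₘ Γ) Δ := by
  have := weak h 0 {a} 0
  simpa [Multiset.singleton_add] using this

/-- `(id)` along a two-step path, via `(lift)`. -/
lemma idPath {R : RAtoms} (Γ Δ : LFml) (w v u p : ℕ)
    (hwv : (w, v) ∈ R) (hvu : (v, u) ∈ R) :
    DerE false false true R ((w, Fml.atom p) ::ₘ Γ) ((u, Fml.atom p) ::ₘ Δ) := by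
  have e1 := Multiset.cons_erase hwv
  rw [← e1]
  refine DerE.lift w v (Fml.atom p) rfl ?_
  rw [e1]
  have e2 := Multiset.cons_erase hvu
  have base := DerE.id (useRef := false) (useTra := false) (useLift := true)
    (R.erase (v, u)) ((w, Fml.atom p) ::ₘ Γ) Δ v u p
  rw [e2, Multiset.cons_swap] at base
  exact base

/-- Admissibility of `(tra)` in the `(tra)`-free system. -/
lemma traAdm {S Γ Δ} (h : DerE false false true S Γ Δ) :
    ∀ w v u R, S = (w, u) ::ₘ R → (w, v) ∈ R → (v, u) ∈ R →
      DerE false false true R Γ Δ := by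
  induction h with
  | id R0 Γ Δ a b p =>
    intro w v u R hS hwv hvu
    rcases Multiset.cons_eq_cons.mp hS with ⟨h1, h2⟩ | ⟨hne, cs, h1, h2⟩
    · simp only [Prod.mk.injEq] at h1
      obtain ⟨ha, hb⟩ := h1
      subst ha; subst hb; subst h2
      exact idPath _ _ _ _ _ _ hwv hvu
    · subst h2
      exact DerE.id _ _ _ _ _ _
  | idStar R0 Γ Δ a p =>
    intro w v u R hS hwv hvu
    exact DerE.idStar _ _ _ _ _
  | botL R0 Γ Δ a =>
    intro w v u R hS hwv hvu
    exact DerE.botL _ _ _ _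
  | andL a A B hd ih =>
    intro w v u R hS hwv hvu
    exact DerE.andL _ _ _ (ih w v u R hS hwv hvu)
  | andR a A B h1 h2 ih1 ih2 =>
    intro w v u R hS hwv hvu
    exact DerE.andR _ _ _ (ih1 w v u R hS hwv hvu) (ih2 w v u R hS hwv hvu)
  | orL a A B h1 h2 ih1 ih2 =>
    intro w v u R hS hwv hvu
    exact DerE.orL _ _ _ (ih1 w v u R hS hwv hvu) (ih2 w v u R hS hwv hvu)
  | orR a A B hd ih =>
    intro w v u R hS hwv hvu
    exact DerE.orR _ _ _ (ih w v u R hS hwv hvu)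
  | impL a b A B h1 h2 ih1 ih2 =>
    rename_i R0 Γ Δ
    intro w v u R hS hwv hvu
    rcases Multiset.cons_eq_cons.mp hS with ⟨h1', h2'⟩ | ⟨hne, cs, h1', h2'⟩
    · simp only [Prod.mk.injEq] at h1'
      obtain ⟨ha, hb⟩ := h1'
      subst ha; subst hb; subst h2'
      -- edge (a,b)=(w,u) eliminated: lift w:A⊃B to v, then impL at (v,u)
      have d1 := ih1 a v b R0 rfl hwv hvu
      have d2 := ih2 a v b R0 rfl hwv hvu
      have e1 := Multiset.cons_erase hwv
      rw [← e1]
      refine DerE.lift a v (Fml.imp A B) rfl ?_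
      rw [e1]
      have e2 := Multiset.cons_erase hvu
      rw [← e2, Multiset.cons_swap (a, Fml.imp A B) (v, Fml.imp A B)]
      refine DerE.impL v b A B ?_ ?_
      · have hh := weakL (v, Fml.imp A B) d1
        rwa [← e2] at hh
      · have hh := weakL (v, Fml.imp A B) d2
        rwa [← e2, Multiset.cons_swap (a, Fml.imp A B) (b, B)] at hh
    · subst h2'
      have hprem : (a, b) ::ₘ R0 = (w, u) ::ₘ ((a, b) ::ₘ cs) := by
        rw [h1', Multiset.cons_swap]
      exact DerE.impL a b A B (ih1 w v u _ hprem hwv hvu) (ih2 w v u _ hprem hwv hvu)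
  | impLStar a A B h1 h2 ih1 ih2 =>
    intro w v u R hS hwv hvu
    exact DerE.impLStar _ _ _ (ih1 w v u R hS hwv hvu) (ih2 w v u R hS hwv hvu)
  | impR a b A B hf hd ih =>
    rename_i R0 Γ Δ
    intro w v u R hS hwv hvu
    subst hS
    have hprem : (a, b) ::ₘ (w, u) ::ₘ R = (w, u) ::ₘ ((a, b) ::ₘ R) :=
      Multiset.cons_swap _ _ _
    have d := ih w v u ((a, b) ::ₘ R) hprem
      (Multiset.mem_cons_of_mem hwv) (Multiset.mem_cons_of_mem hvu)
    refine DerE.impR a b A B ?_ d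
    obtain ⟨f1, f2, f3⟩ := hf
    exact ⟨fun q hq => f1 q (Multiset.mem_cons_of_mem hq), f2, f3⟩
  | lift a b A htt hd ih =>
    rename_i R0 Γ Δ
    intro w v u R hS hwv hvu
    rcases Multiset.cons_eq_cons.mp hS with ⟨h1', h2'⟩ | ⟨hne, cs, h1', h2'⟩
    · simp only [Prod.mk.injEq] at h1'
      obtain ⟨ha, hb⟩ := h1'
      subst ha; subst hb; subst h2'
      have d := ih a v b R0 rfl hwv hvu
      -- d : R0, (a,A)::(b,A)::Γ ⇒ Δ ; goal : R0, (a,A)::Γ ⇒ Δ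
      have e1 := Multiset.cons_erase hwv
      rw [← e1]
      refine DerE.lift a v A rfl ?_
      rw [e1]
      -- goal : R0, (a,A)::(v,A)::Γ ⇒ Δ
      have e2 := Multiset.cons_erase hvu
      rw [← e2, Multiset.cons_swap (a, A) (v, A)]
      refine DerE.lift v b A rfl ?_
      -- goal : (v,b)::erase, (v,A)::(b,A)::(a,A)::Γ ⇒ Δ
      have hh := weakL (v, A) d
      rwa [← e2, Multiset.cons_swap (a, A) (b, A)] at hh
    · subst h2'
      have hprem : (a, b) ::ₘ R0 = (w, u) ::ₘ ((a, b) ::ₘ cs) := by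
        rw [h1', Multiset.cons_swap]
      exact DerE.lift a b A rfl (ih w v u _ hprem hwv hvu)
  | ref a htt hd ih => exact absurd htt (by simp)
  | tra a b c htt hd ih => exact absurd htt (by simp)

/-- `(tra)` is eliminable in `G3Int + {(id*), (⊃_l*), (lift)} − (ref)`: every
derivation in `G3Int` extended with `(id*)`, `(⊃_l*)` and `(lift)`, without
`(ref)`, can be transformed into one of the same end sequent without
`(tra)`. -/
theorem stmt10 (R : RAtoms) (Γ Δ : LFml)
    (h : DerE false true true R Γ Δ) :
    DerE false false true R Γ Δ := by
  induction h with
  | id R Γ Δ w v p => exact DerE.id _ _ _ _ _ _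
  | idStar R Γ Δ w p => exact DerE.idStar _ _ _ _ _
  | botL R Γ Δ w => exact DerE.botL _ _ _ _
  | andL w A B hd ih => exact DerE.andL _ _ _ ih
  | andR w A B h1 h2 ih1 ih2 => exact DerE.andR _ _ _ ih1 ih2
  | orL w A B h1 h2 ih1 ih2 => exact DerE.orL _ _ _ ih1 ih2
  | orR w A B hd ih => exact DerE.orR _ _ _ ih
  | impL w v A B h1 h2 ih1 ih2 => exact DerE.impL _ _ _ _ ih1 ih2
  | impLStar w A B h1 h2 ih1 ih2 => exact DerE.impLStar _ _ _ ih1 ih2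
  | impR w v A B hf hd ih => exact DerE.impR _ _ _ _ hf ih
  | lift w u A htt hd ih => exact DerE.lift _ _ _ rfl ih
  | ref w htt hd ih => exact absurd htt (by simp)
  | tra w v u htt hd ih =>
    rename_i R0 G0 D0
    refine traAdm ih w v u ((w, v) ::ₘ (v, u) ::ₘ R0) ?_ ?_ ?_
    · rw [Multiset.cons_swap (v, u) (w, u), Multiset.cons_swap (w, v) (w, u)]
    · exact Multiset.mem_cons_self _ _
    · exact Multiset.mem_cons_of_mem (Multiset.mem_cons_self _ _)
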